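/- Let q ∈ (0,∞), let X(μ) and Y(μ) be quasi-Banach function spaces over the same measure μ, and let T: X(μ)+Y(μ) → E be a linear operator with values in a quasi-Banach space E. Then T is q-concave if and only if both restrictions T: X(μ) → E and T: Y(μ) → E are q-concave. -/

import Mathlib

open MeasureTheory Filter Topology

variable {Ω : Type*} [MeasurableSpace Ω]

/-- A quasi-Banach function space over the measure `μ`: a complete quasi-normed ideal of
(a.e.-classes of) measurable real functions.  Membership and the quasi-norm are given on
raw functions and are invariant under `μ`-a.e. equality. -/
structure QBFS (μ : Measure Ω) where
  Mem : (Ω → ℝ) → Prop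
  nrm : (Ω → ℝ) → ℝ
  mem_congr : ∀ {f g : Ω → ℝ}, Mem f → f =ᵐ[μ] g → Mem g
  nrm_congr : ∀ {f g : Ω → ℝ}, f =ᵐ[μ] g → nrm f = nrm g
  mem_meas : ∀ {f : Ω → ℝ}, Mem f → AEStronglyMeasurable f μ
  zero_mem : Mem 0
  add_mem : ∀ {f g : Ω → ℝ}, Mem f → Mem g → Mem (f + g)
  smul_mem : ∀ (c : ℝ) {f : Ω → ℝ}, Mem f → Mem (c • f)
  nrm_nonneg : ∀ f : Ω → ℝ, 0 ≤ nrm f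
  nrm_eq_zero_iff : ∀ {f : Ω → ℝ}, Mem f → (nrm f = 0 ↔ f =ᵐ[μ] 0)
  nrm_smul : ∀ (c : ℝ) {f : Ω → ℝ}, Mem f → nrm (c • f) = |c| * nrm f
  K : ℝ
  one_le_K : 1 ≤ K
  nrm_add_le : ∀ {f g : Ω → ℝ}, Mem f → Mem g → nrm (f + g) ≤ K * (nrm f + nrm g)
  ideal_mem : ∀ {f g : Ω → ℝ}, Mem f → AEStronglyMeasurable g μ →
    (∀ᵐ ω ∂μ, |g ω| ≤ |f ω|) → Mem g
  ideal_nrm : ∀ {f g : Ω → ℝ}, Mem f → Mem g → (∀ᵐ ω ∂μ, |g ω| ≤ |f ω|) → nrm g ≤ nrm f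
  complete : ∀ F : ℕ → Ω → ℝ, (∀ n, Mem (F n)) →
    (∀ ε : ℝ, 0 < ε → ∃ N : ℕ, ∀ m ≥ N, ∀ n ≥ N, nrm (F m - F n) < ε) →
    ∃ f : Ω → ℝ, Mem f ∧ Tendsto (fun n => nrm (f - F n)) atTop (𝓝 0)

/-- σ-order continuity: if `fₙ ↓ 0` μ-a.e. then `‖fₙ‖ → 0`. -/
def SigmaOC (μ : Measure Ω) (Mem : (Ω → ℝ) → Prop) (nrm : (Ω → ℝ) → ℝ) : Prop :=
  ∀ F : ℕ → Ω → ℝ, (∀ n, Mem (F n)) →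
    (∀ᵐ ω ∂μ, Antitone fun n => F n ω) →
    (∀ᵐ ω ∂μ, Tendsto (fun n => F n ω) atTop (𝓝 0)) →
    Tendsto (fun n => nrm (F n)) atTop (𝓝 0)

/-- `q`-concavity of a space given by membership predicate `Mem` and quasi-norm `nrm`. -/
def SpaceQConcave (Mem : (Ω → ℝ) → Prop) (nrm : (Ω → ℝ) → ℝ) (q : ℝ) : Prop :=
  ∃ C : ℝ, 0 < C ∧ ∀ (n : ℕ) (f : Fin n → Ω → ℝ), (∀ j, Mem (f j)) →
    (∑ j, nrm (f j) ^ q) ^ (1 / q) ≤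
      C * nrm (fun ω => (∑ j, |f j ω| ^ q) ^ (1 / q))

/-- A quasi-norm on a real vector space `E`. -/
structure QuasiNorm (E : Type*) [AddCommGroup E] [Module ℝ E] where
  qnorm : E → ℝ
  qnorm_nonneg : ∀ x, 0 ≤ qnorm x
  qnorm_eq_zero_iff : ∀ x, qnorm x = 0 ↔ x = 0
  qnorm_smul : ∀ (a : ℝ) (x : E), qnorm (a • x) = |a| * qnorm x
  K : ℝ
  one_le_K : 1 ≤ K
  qnorm_add_le : ∀ x y, qnorm (x + y) ≤ K * (qnorm x + qnorm y)

/-- Completeness with respect to a quasi-norm. -/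
def QuasiNorm.IsComplete {E : Type*} [AddCommGroup E] [Module ℝ E] (N : QuasiNorm E) : Prop :=
  ∀ x : ℕ → E,
    (∀ ε : ℝ, 0 < ε → ∃ M : ℕ, ∀ m ≥ M, ∀ n ≥ M, N.qnorm (x m - x n) < ε) →
    ∃ l : E, Tendsto (fun n => N.qnorm (l - x n)) atTop (𝓝 0)

/-- Membership in the sum space of two function spaces. -/
def sumMem (μ : Measure Ω) (Mem₁ Mem₂ : (Ω → ℝ) → Prop) (f : Ω → ℝ) : Prop :=
  ∃ g h : Ω → ℝ, Mem₁ g ∧ Mem₂ h ∧ f =ᵐ[μ] g + h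

/-- The quasi-norm on the sum space of two function spaces. -/
noncomputable def sumNrm (μ : Measure Ω) (Mem₁ Mem₂ : (Ω → ℝ) → Prop)
    (nrm₁ nrm₂ : (Ω → ℝ) → ℝ) (f : Ω → ℝ) : ℝ :=
  sInf {a : ℝ | ∃ g h : Ω → ℝ, Mem₁ g ∧ Mem₂ h ∧ f =ᵐ[μ] g + h ∧ a = nrm₁ g + nrm₂ h}

/-- `q`-concavity of an operator `T` (defined on the functions satisfying `Mem`, with domain
quasi-norm `nrm`) with values in a quasi-normed space `(E, NE)`. -/
def OpQConcave {E : Type*} [AddCommGroup E] [Module ℝ E] (NE : QuasiNorm E)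
    (Mem : (Ω → ℝ) → Prop) (nrm : (Ω → ℝ) → ℝ) (T : (Ω → ℝ) → E) (q : ℝ) : Prop :=
  ∃ C : ℝ, 0 < C ∧ ∀ (n : ℕ) (f : Fin n → Ω → ℝ), (∀ j, Mem (f j)) →
    (∑ j, NE.qnorm (T (f j)) ^ q) ^ (1 / q) ≤
      C * nrm (fun ω => (∑ j, |f j ω| ^ q) ^ (1 / q))

section AuxHelpers

variable {μ : Measure Ω}

private lemma aem_abs {f : Ω → ℝ} (hf : AEMeasurable f μ) :
    AEMeasurable (fun ω => |f ω|) μ :=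
  continuous_abs.measurable.comp_aemeasurable hf

private lemma aem_rpow {f : Ω → ℝ} (hf : AEMeasurable f μ) {p : ℝ} (hp : 0 ≤ p) :
    AEMeasurable (fun ω => f ω ^ p) μ :=
  (Real.continuous_rpow_const hp).measurable.comp_aemeasurable hf

private lemma rpow_inv_rpow' {x q : ℝ} (hx : 0 ≤ x) (hq : q ≠ 0) : (x ^ q) ^ (1 / q) = x := by
  rw [← Real.rpow_mul hx, mul_one_div_cancel hq, Real.rpow_one]

private lemma rpow_add_le2 {A B p : ℝ} (hA : 0 ≤ A) (hB : 0 ≤ B) (hp : 0 < p) :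
    (A + B) ^ p ≤ 2 ^ p * (A ^ p + B ^ p) := by
  have hm : A + B ≤ 2 * max A B := by
    rcases le_total A B with h | h
    · have : max A B = B := max_eq_right h
      rw [this]; linarith
    · have : max A B = A := max_eq_left h
      rw [this]; linarith
  have h0 : 0 ≤ A + B := add_nonneg hA hB
  have hmax0 : 0 ≤ max A B := le_trans hA (le_max_left _ _)
  calc (A + B) ^ p ≤ (2 * max A B) ^ p := Real.rpow_le_rpow h0 hm hp.le
    _ = 2 ^ p * (max A B) ^ p := Real.mul_rpow (by norm_num) hmax0
    _ ≤ 2 ^ p * (A ^ p + B ^ p) := by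
        refine mul_le_mul_of_nonneg_left ?_ (Real.rpow_nonneg (by norm_num) p)
        rcases max_cases A B with ⟨h1, _⟩ | ⟨h1, _⟩ <;> rw [h1]
        · exact le_add_of_nonneg_right (Real.rpow_nonneg hB p)
        · exact le_add_of_nonneg_left (Real.rpow_nonneg hA p)

private lemma lq_sum_le {n : ℕ} {q : ℝ} (hq : 0 < q) (a : Fin n → ℝ) (ha : ∀ j, 0 ≤ a j) :
    (∑ j, a j ^ q) ^ (1 / q) ≤ (n : ℝ) ^ (1 / q) * ∑ j, a j := by
  have hsum0 : 0 ≤ ∑ j, a j := Finset.sum_nonneg fun j _ => ha j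
  have h1 : ∑ j, a j ^ q ≤ (n : ℝ) * (∑ j, a j) ^ q := by
    calc ∑ j, a j ^ q ≤ ∑ _j : Fin n, (∑ j, a j) ^ q := by
          refine Finset.sum_le_sum fun j _ => ?_
          exact Real.rpow_le_rpow (ha j)
            (Finset.single_le_sum (fun i _ => ha i) (Finset.mem_univ j)) hq.le
      _ = (n : ℝ) * (∑ j, a j) ^ q := by
          rw [Finset.sum_const, Finset.card_univ, Fintype.card_fin, nsmul_eq_mul]
  calc (∑ j, a j ^ q) ^ (1 / q)
      ≤ ((n : ℝ) * (∑ j, a j) ^ q) ^ (1 / q) :=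
        Real.rpow_le_rpow (Finset.sum_nonneg fun j _ => Real.rpow_nonneg (ha j) q) h1
          (by positivity)
    _ = (n : ℝ) ^ (1 / q) * ∑ j, a j := by
        rw [Real.mul_rpow (Nat.cast_nonneg n) (Real.rpow_nonneg hsum0 q),
          rpow_inv_rpow' hsum0 hq.ne']

private lemma le_lq {n : ℕ} {q : ℝ} (hq : 0 < q) (a : Fin n → ℝ) (ha : ∀ j, 0 ≤ a j)
    (j : Fin n) : a j ≤ (∑ i, a i ^ q) ^ (1 / q) := by
  have h1 : a j ^ q ≤ ∑ i, a i ^ q :=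
    Finset.single_le_sum (fun i _ => Real.rpow_nonneg (ha i) q) (Finset.mem_univ j)
  calc a j = (a j ^ q) ^ (1 / q) := (rpow_inv_rpow' (ha j) hq.ne').symm
    _ ≤ (∑ i, a i ^ q) ^ (1 / q) :=
        Real.rpow_le_rpow (Real.rpow_nonneg (ha j) q) h1 (by positivity)

private lemma QBFS.abs_mem (Z : QBFS μ) {f : Ω → ℝ} (hf : Z.Mem f) :
    Z.Mem (fun ω => |f ω|) := by
  refine Z.ideal_mem hf ?_ (Filter.Eventually.of_forall fun ω => by simp [abs_abs])
  exact (aem_abs (Z.mem_meas hf).aemeasurable).aestronglyMeasurable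

private lemma QBFS.sum_mem (Z : QBFS μ) : ∀ {n : ℕ} (f : Fin n → Ω → ℝ),
    (∀ j, Z.Mem (f j)) → Z.Mem (fun ω => ∑ j, f j ω) := by
  intro n
  induction n with
  | zero =>
      intro f _
      have h0 : (fun ω : Ω => ∑ j : Fin 0, f j ω) = 0 := by funext ω; simp
      rw [h0]; exact Z.zero_mem
  | succ m ih =>
      intro f hf
      have h1 : Z.Mem (fun ω => ∑ j : Fin m, f j.succ ω) := ih _ (fun j => hf j.succ)
      have heq : (fun ω => ∑ j : Fin (m + 1), f j ω)
          = (f 0 + fun ω => ∑ j : Fin m, f j.succ ω) := by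
        funext ω; simp [Fin.sum_univ_succ]
      rw [heq]; exact Z.add_mem (hf 0) h1

private lemma QBFS.qmem (Z : QBFS μ) {q : ℝ} (hq : 0 < q) {n : ℕ} (f : Fin n → Ω → ℝ)
    (hf : ∀ j, Z.Mem (f j)) :
    Z.Mem (fun ω => (∑ j, |f j ω| ^ q) ^ (1 / q)) := by
  have hS : Z.Mem (fun ω => ∑ j, |f j ω|) := Z.sum_mem _ fun j => Z.abs_mem (hf j)
  have hdom : Z.Mem ((n : ℝ) ^ (1 / q) • fun ω => ∑ j, |f j ω|) := Z.smul_mem _ hS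
  refine Z.ideal_mem hdom ?_ (Filter.Eventually.of_forall fun ω => ?_)
  · refine (aem_rpow (Finset.aemeasurable_fun_sum _ fun j _ => ?_) (by positivity)).aestronglyMeasurable
    exact aem_rpow (aem_abs (Z.mem_meas (hf j)).aemeasurable) hq.le
  · have h2 : 0 ≤ (∑ j, |f j ω| ^ q) ^ (1 / q) :=
      Real.rpow_nonneg (Finset.sum_nonneg fun j _ => Real.rpow_nonneg (abs_nonneg _) q) _
    rw [abs_of_nonneg h2]
    calc (∑ j, |f j ω| ^ q) ^ (1 / q) ≤ (n : ℝ) ^ (1 / q) * ∑ j, |f j ω| :=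
          lq_sum_le hq _ fun j => abs_nonneg _
      _ ≤ |((n : ℝ) ^ (1 / q) • fun ω => ∑ j, |f j ω|) ω| := by
          simp only [Pi.smul_apply, smul_eq_mul]
          exact le_abs_self _

private lemma QBFS.trim (X Y : QBFS μ) {u v F : Ω → ℝ}
    (hu : X.Mem u) (hv : Y.Mem v) (hF : AEStronglyMeasurable F μ)
    (hF0 : ∀ ω, 0 ≤ F ω) (hle : ∀ᵐ ω ∂μ, F ω ≤ |u ω| + |v ω|) :
    ∃ u₀ v₀ : Ω → ℝ, X.Mem u₀ ∧ Y.Mem v₀ ∧ (∀ ω, 0 ≤ u₀ ω) ∧ (∀ ω, 0 ≤ v₀ ω) ∧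
      (∀ ω, F ω = u₀ ω + v₀ ω) ∧ X.nrm u₀ ≤ X.nrm u ∧ Y.nrm v₀ ≤ Y.nrm v := by
  have hu00 : ∀ ω, 0 ≤ min |u ω| (F ω) := fun ω => le_min (abs_nonneg _) (hF0 ω)
  have hu0le : ∀ ω, |min |u ω| (F ω)| ≤ |u ω| := fun ω => by
    rw [abs_of_nonneg (hu00 ω)]; exact min_le_left _ _
  have hv0le : ∀ᵐ ω ∂μ, |F ω - min |u ω| (F ω)| ≤ |v ω| := by
    filter_upwards [hle] with ω hω
    rw [abs_of_nonneg (sub_nonneg.mpr (min_le_right _ _))]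
    rcases le_total |u ω| (F ω) with h | h
    · rw [min_eq_left h]; linarith
    · rw [min_eq_right h]; simp [abs_nonneg]
  have humeas : AEStronglyMeasurable (fun ω => min |u ω| (F ω)) μ :=
    ((aem_abs (X.mem_meas hu).aemeasurable).min hF.aemeasurable).aestronglyMeasurable
  have hvmeas : AEStronglyMeasurable (fun ω => F ω - min |u ω| (F ω)) μ :=
    (hF.aemeasurable.sub
      ((aem_abs (X.mem_meas hu).aemeasurable).min hF.aemeasurable)).aestronglyMeasurable
  have hu₀mem : X.Mem (fun ω => min |u ω| (F ω)) :=
    X.ideal_mem hu humeas (Filter.Eventually.of_forall hu0le)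
  have hv₀mem : Y.Mem (fun ω => F ω - min |u ω| (F ω)) := Y.ideal_mem hv hvmeas hv0le
  exact ⟨fun ω => min |u ω| (F ω), fun ω => F ω - min |u ω| (F ω), hu₀mem, hv₀mem, hu00,
    fun ω => sub_nonneg.mpr (min_le_right _ _), fun ω => by ring,
    X.ideal_nrm hu hu₀mem (Filter.Eventually.of_forall hu0le), Y.ideal_nrm hv hv₀mem hv0le⟩

private lemma QBFS.half (Z : QBFS μ) {q : ℝ} (hq : 0 < q) {n : ℕ}
    (f : Fin n → Ω → ℝ) (hfm : ∀ j, AEStronglyMeasurable (f j) μ)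
    (w D : Ω → ℝ) (hw : Z.Mem w) (hw0 : ∀ ω, 0 ≤ w ω) (hwD : ∀ ω, w ω ≤ D ω)
    (hD : ∀ ω, (∑ j, |f j ω| ^ q) ^ (1 / q) = D ω) (hDm : AEMeasurable D μ) :
    (∀ j, Z.Mem fun ω => f j ω * (w ω / D ω)) ∧
      Z.nrm (fun ω => (∑ j, |f j ω * (w ω / D ω)| ^ q) ^ (1 / q)) ≤ Z.nrm w := by
  have hD0 : ∀ ω, 0 ≤ D ω := fun ω => (hD ω) ▸ Real.rpow_nonneg
    (Finset.sum_nonneg fun j _ => Real.rpow_nonneg (abs_nonneg _) q) _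
  have hfD : ∀ (j : Fin n) ω, |f j ω| ≤ D ω := fun j ω =>
    (hD ω) ▸ le_lq hq (fun i => |f i ω|) (fun i => abs_nonneg _) j
  have hfzero : ∀ ω, D ω = 0 → ∀ j : Fin n, f j ω = 0 := fun ω h0 j =>
    abs_nonpos_iff.mp (h0 ▸ hfD j ω)
  have hgle : ∀ (j : Fin n) ω, |f j ω * (w ω / D ω)| ≤ w ω := by
    intro j ω
    rcases eq_or_ne (D ω) 0 with h0 | h0
    · simp [hfzero ω h0 j, hw0 ω]
    · rw [abs_mul, abs_of_nonneg (div_nonneg (hw0 ω) (hD0 ω))]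
      calc |f j ω| * (w ω / D ω) ≤ D ω * (w ω / D ω) :=
            mul_le_mul_of_nonneg_right (hfD j ω) (div_nonneg (hw0 ω) (hD0 ω))
        _ = w ω := by field_simp
  have hgm : ∀ j, AEStronglyMeasurable (fun ω => f j ω * (w ω / D ω)) μ := fun j =>
    ((hfm j).aemeasurable.mul ((Z.mem_meas hw).aemeasurable.div hDm)).aestronglyMeasurable
  have hgmem : ∀ j, Z.Mem fun ω => f j ω * (w ω / D ω) := fun j =>
    Z.ideal_mem hw (hgm j)
      (Filter.Eventually.of_forall fun ω => le_trans (hgle j ω) (le_abs_self _))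
  have hGle : ∀ ω, (∑ j, |f j ω * (w ω / D ω)| ^ q) ^ (1 / q) ≤ w ω := by
    intro ω
    rcases eq_or_ne (D ω) 0 with h0 | h0
    · have hz : ∀ j : Fin n, |f j ω * (w ω / D ω)| ^ q = 0 := by
        intro j; rw [hfzero ω h0 j]; simp [Real.zero_rpow hq.ne']
      rw [Finset.sum_congr rfl fun j _ => hz j, Finset.sum_const, smul_zero,
        Real.zero_rpow (one_div_ne_zero hq.ne')]
      exact hw0 ω
    · have ha0 : 0 ≤ w ω / D ω := div_nonneg (hw0 ω) (hD0 ω)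
      have hj : ∀ j : Fin n, |f j ω * (w ω / D ω)| ^ q = |f j ω| ^ q * (w ω / D ω) ^ q := by
        intro j; rw [abs_mul, abs_of_nonneg ha0, Real.mul_rpow (abs_nonneg _) ha0]
      rw [Finset.sum_congr rfl fun j _ => hj j, ← Finset.sum_mul,
        Real.mul_rpow (Finset.sum_nonneg fun j _ => Real.rpow_nonneg (abs_nonneg _) q)
          (Real.rpow_nonneg ha0 q),
        hD ω, rpow_inv_rpow' ha0 hq.ne']
      refine le_of_eq ?_
      field_simp
  have hGmeas : AEStronglyMeasurable (fun ω => (∑ j, |f j ω * (w ω / D ω)| ^ q) ^ (1 / q)) μ := by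
    refine (aem_rpow (Finset.aemeasurable_fun_sum _ fun j _ => ?_) (by positivity)).aestronglyMeasurable
    exact aem_rpow (aem_abs (hgm j).aemeasurable) hq.le
  have hGabs : ∀ ω, |(∑ j, |f j ω * (w ω / D ω)| ^ q) ^ (1 / q)| ≤ |w ω| := by
    intro ω
    rw [abs_of_nonneg (Real.rpow_nonneg
      (Finset.sum_nonneg fun j _ => Real.rpow_nonneg (abs_nonneg _) q) _)]
    exact le_trans (hGle ω) (le_abs_self _)
  have hGmem : Z.Mem (fun ω => (∑ j, |f j ω * (w ω / D ω)| ^ q) ^ (1 / q)) :=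
    Z.ideal_mem hw hGmeas (Filter.Eventually.of_forall hGabs)
  exact ⟨hgmem, Z.ideal_nrm hw hGmem (Filter.Eventually.of_forall hGabs)⟩

private lemma sumNrm_le_left (X Y : QBFS μ) {f : Ω → ℝ} (h : X.Mem f) :
    sumNrm μ X.Mem Y.Mem X.nrm Y.nrm f ≤ X.nrm f := by
  have hb : BddBelow {a : ℝ | ∃ g h : Ω → ℝ, X.Mem g ∧ Y.Mem h ∧ f =ᵐ[μ] g + h ∧
      a = X.nrm g + Y.nrm h} := by
    refine ⟨0, fun a ha => ?_⟩
    obtain ⟨g, h', _, _, _, rfl⟩ := ha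
    exact add_nonneg (X.nrm_nonneg g) (Y.nrm_nonneg h')
  have hmem : X.nrm f + Y.nrm 0 ∈ {a : ℝ | ∃ g h : Ω → ℝ, X.Mem g ∧ Y.Mem h ∧
      f =ᵐ[μ] g + h ∧ a = X.nrm g + Y.nrm h} :=
    ⟨f, 0, h, Y.zero_mem, by rw [add_zero], rfl⟩
  have h0 : Y.nrm 0 = 0 := (Y.nrm_eq_zero_iff Y.zero_mem).mpr EventuallyEq.rfl
  have := csInf_le hb hmem
  rw [h0, add_zero] at this
  exact this

private lemma sumNrm_le_right (X Y : QBFS μ) {f : Ω → ℝ} (h : Y.Mem f) :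
    sumNrm μ X.Mem Y.Mem X.nrm Y.nrm f ≤ Y.nrm f := by
  have hb : BddBelow {a : ℝ | ∃ g h : Ω → ℝ, X.Mem g ∧ Y.Mem h ∧ f =ᵐ[μ] g + h ∧
      a = X.nrm g + Y.nrm h} := by
    refine ⟨0, fun a ha => ?_⟩
    obtain ⟨g, h', _, _, _, rfl⟩ := ha
    exact add_nonneg (X.nrm_nonneg g) (Y.nrm_nonneg h')
  have hmem : X.nrm 0 + Y.nrm f ∈ {a : ℝ | ∃ g h : Ω → ℝ, X.Mem g ∧ Y.Mem h ∧
      f =ᵐ[μ] g + h ∧ a = X.nrm g + Y.nrm h} :=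
    ⟨0, f, X.zero_mem, h, by rw [zero_add], rfl⟩
  have h0 : X.nrm 0 = 0 := (X.nrm_eq_zero_iff X.zero_mem).mpr EventuallyEq.rfl
  have := csInf_le hb hmem
  rw [h0, zero_add] at this
  exact this

end AuxHelpers

/-- A linear operator on `X(μ)+Y(μ)` is `q`-concave iff its restrictions to `X(μ)` and to
`Y(μ)` are both `q`-concave. -/
theorem opQConcave_sum_iff (μ : Measure Ω) (X Y : QBFS μ) (q : ℝ) (hq : 0 < q)
    {E : Type*} [AddCommGroup E] [Module ℝ E] (NE : QuasiNorm E) (hE : NE.IsComplete)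
    (T : (Ω → ℝ) → E)
    (Tae : ∀ f g : Ω → ℝ, sumMem μ X.Mem Y.Mem f → f =ᵐ[μ] g → T f = T g)
    (Tadd : ∀ f g : Ω → ℝ, sumMem μ X.Mem Y.Mem f → sumMem μ X.Mem Y.Mem g →
      T (f + g) = T f + T g)
    (Tsmul : ∀ (c : ℝ) (f : Ω → ℝ), sumMem μ X.Mem Y.Mem f → T (c • f) = c • T f) :
    OpQConcave NE (sumMem μ X.Mem Y.Mem) (sumNrm μ X.Mem Y.Mem X.nrm Y.nrm) T q ↔
      (OpQConcave NE X.Mem X.nrm T q ∧ OpQConcave NE Y.Mem Y.nrm T q) := by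
  
  constructor
  · rintro ⟨C, hC, hTq⟩
    refine ⟨⟨C, hC, fun n f hf => ?_⟩, ⟨C, hC, fun n f hf => ?_⟩⟩
    · refine (hTq n f fun j => ⟨f j, 0, hf j, Y.zero_mem, by rw [add_zero]⟩).trans ?_
      exact mul_le_mul_of_nonneg_left (sumNrm_le_left X Y (X.qmem hq f hf)) hC.le
    · refine (hTq n f fun j => ⟨0, f j, X.zero_mem, hf j, by rw [zero_add]⟩).trans ?_
      exact mul_le_mul_of_nonneg_left (sumNrm_le_right X Y (Y.qmem hq f hf)) hC.le
  · rintro ⟨⟨CX, hCX, hXc⟩, ⟨CY, hCY, hYc⟩⟩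
    have hK : (0 : ℝ) < NE.K := lt_of_lt_of_le one_pos NE.one_le_K
    have hCm : (0 : ℝ) < max CX CY := lt_of_lt_of_le hCX (le_max_left _ _)
    have h2q : (0 : ℝ) < 2 ^ (1 / q) := Real.rpow_pos_of_pos two_pos _
    have hC₀ : (0 : ℝ) < 2 * 2 ^ (1 / q) * NE.K * max CX CY :=
      mul_pos (mul_pos (mul_pos two_pos h2q) hK) hCm
    refine ⟨2 * 2 ^ (1 / q) * NE.K * max CX CY, hC₀, fun n f hf => ?_⟩
    have hfm : ∀ j, AEStronglyMeasurable (f j) μ := fun j => by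
      obtain ⟨g, h, hg, hh, hfe⟩ := hf j
      exact ((X.mem_meas hg).add (Y.mem_meas hh)).congr hfe.symm
    have hSnn : ∀ ω, 0 ≤ ∑ j, |f j ω| ^ q :=
      fun ω => Finset.sum_nonneg fun j _ => Real.rpow_nonneg (abs_nonneg _) q
    have hF0 : ∀ ω, 0 ≤ (∑ j, |f j ω| ^ q) ^ (1 / q) := fun ω => Real.rpow_nonneg (hSnn ω) _
    have hFm : AEStronglyMeasurable (fun ω => (∑ j, |f j ω| ^ q) ^ (1 / q)) μ := by
      refine (aem_rpow (Finset.aemeasurable_fun_sum _ fun j _ => ?_) (by positivity)).aestronglyMeasurable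
      exact aem_rpow (aem_abs (hfm j).aemeasurable) hq.le
    -- the decomposition set is nonempty
    choose g0 h0 hg0 hh0 hfe0 using hf
    have hUmem : X.Mem ((n : ℝ) ^ (1 / q) • fun ω => ∑ j, |g0 j ω|) :=
      X.smul_mem _ (X.sum_mem _ fun j => X.abs_mem (hg0 j))
    have hVmem : Y.Mem ((n : ℝ) ^ (1 / q) • fun ω => ∑ j, |h0 j ω|) :=
      Y.smul_mem _ (Y.sum_mem _ fun j => Y.abs_mem (hh0 j))
    have hbound : ∀ᵐ ω ∂μ, (∑ j, |f j ω| ^ q) ^ (1 / q) ≤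
        |((n : ℝ) ^ (1 / q) • fun ω => ∑ j, |g0 j ω|) ω| +
          |((n : ℝ) ^ (1 / q) • fun ω => ∑ j, |h0 j ω|) ω| := by
      have hall : ∀ᵐ ω ∂μ, ∀ j, f j ω = g0 j ω + h0 j ω := ae_all_iff.mpr fun j => hfe0 j
      filter_upwards [hall] with ω hω
      simp only [Pi.smul_apply, smul_eq_mul]
      have h1 : (∑ j, |f j ω| ^ q) ^ (1 / q) ≤ (n : ℝ) ^ (1 / q) * ∑ j, |f j ω| :=
        lq_sum_le hq _ fun j => abs_nonneg _
      have h2 : ∑ j, |f j ω| ≤ (∑ j, |g0 j ω|) + ∑ j, |h0 j ω| := by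
        rw [← Finset.sum_add_distrib]
        exact Finset.sum_le_sum fun j _ => by rw [hω j]; exact abs_add_le _ _
      have h3 : (0 : ℝ) ≤ (n : ℝ) ^ (1 / q) := Real.rpow_nonneg (Nat.cast_nonneg n) _
      calc (∑ j, |f j ω| ^ q) ^ (1 / q)
          ≤ (n : ℝ) ^ (1 / q) * ((∑ j, |g0 j ω|) + ∑ j, |h0 j ω|) :=
            h1.trans (mul_le_mul_of_nonneg_left h2 h3)
        _ = (n : ℝ) ^ (1 / q) * (∑ j, |g0 j ω|) + (n : ℝ) ^ (1 / q) * ∑ j, |h0 j ω| :=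
            mul_add _ _ _
        _ ≤ _ := add_le_add (le_abs_self _) (le_abs_self _)
    obtain ⟨u₁, v₁, hu₁, hv₁, -, -, hdec₁, -, -⟩ := QBFS.trim X Y hUmem hVmem hFm hF0 hbound
    have hne : {a : ℝ | ∃ g h : Ω → ℝ, X.Mem g ∧ Y.Mem h ∧
        (fun ω => (∑ j, |f j ω| ^ q) ^ (1 / q)) =ᵐ[μ] g + h ∧
        a = X.nrm g + Y.nrm h}.Nonempty :=
      ⟨X.nrm u₁ + Y.nrm v₁, u₁, v₁, hu₁, hv₁,
        Filter.Eventually.of_forall fun ω => hdec₁ ω, rfl⟩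
    -- ε-argument
    refine le_of_forall_pos_le_add fun ε hε => ?_
    obtain ⟨a, haSS, halt⟩ := Real.lt_sInf_add_pos hne
      (show (0 : ℝ) < ε / (2 * 2 ^ (1 / q) * NE.K * max CX CY) from div_pos hε hC₀)
    obtain ⟨u, v, hu, hv, hFuv, haeq⟩ := haSS
    have hbound2 : ∀ᵐ ω ∂μ, (∑ j, |f j ω| ^ q) ^ (1 / q) ≤ |u ω| + |v ω| := by
      filter_upwards [hFuv] with ω hω
      rw [hω]
      exact le_trans (le_abs_self _) (abs_add_le _ _)
    obtain ⟨u₀, v₀, hu₀, hv₀, hu₀0, hv₀0, hFsum, hnu, hnv⟩ :=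
      QBFS.trim X Y hu hv hFm hF0 hbound2
    have hFsum' : ∀ ω, (∑ j, |f j ω| ^ q) ^ (1 / q) = u₀ ω + v₀ ω := fun ω => hFsum ω
    have hDm : AEMeasurable (fun ω => u₀ ω + v₀ ω) μ :=
      (X.mem_meas hu₀).aemeasurable.add (Y.mem_meas hv₀).aemeasurable
    have hDX := QBFS.half X hq f hfm u₀ (fun ω => u₀ ω + v₀ ω) hu₀ hu₀0
      (fun ω => le_add_of_nonneg_right (hv₀0 ω)) hFsum' hDm
    have hDY := QBFS.half Y hq f hfm v₀ (fun ω => u₀ ω + v₀ ω) hv₀ hv₀0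
      (fun ω => le_add_of_nonneg_left (hu₀0 ω)) hFsum' hDm
    -- the splitting
    have hsplit : ∀ j, f j = (fun ω => f j ω * (u₀ ω / (u₀ ω + v₀ ω)))
        + (fun ω => f j ω * (v₀ ω / (u₀ ω + v₀ ω))) := by
      intro j; funext ω
      simp only [Pi.add_apply]
      rcases eq_or_ne (u₀ ω + v₀ ω) 0 with h0 | h0
      · have hf0 : f j ω = 0 := by
          have h1 := (le_lq hq (fun i => |f i ω|) (fun i => abs_nonneg _) j).trans_eq
            ((hFsum' ω).trans h0)
          exact abs_nonpos_iff.mp h1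
        simp [hf0]
      · have h1 : u₀ ω / (u₀ ω + v₀ ω) + v₀ ω / (u₀ ω + v₀ ω) = 1 := by
          rw [← add_div, div_self h0]
        rw [← mul_add, h1, mul_one]
    have hTsplit : ∀ j, T (f j) = T (fun ω => f j ω * (u₀ ω / (u₀ ω + v₀ ω)))
        + T (fun ω => f j ω * (v₀ ω / (u₀ ω + v₀ ω))) := by
      intro j
      conv_lhs => rw [hsplit j]
      exact Tadd _ _ ⟨_, 0, hDX.1 j, Y.zero_mem, by rw [add_zero]⟩
        ⟨0, _, X.zero_mem, hDY.1 j, by rw [zero_add]⟩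
    -- estimates on the two halves
    have hXest : (∑ j, NE.qnorm (T (fun ω => f j ω * (u₀ ω / (u₀ ω + v₀ ω)))) ^ q) ^ (1 / q)
        ≤ CX * X.nrm u :=
      (hXc n (fun j ω => f j ω * (u₀ ω / (u₀ ω + v₀ ω))) hDX.1).trans
        (mul_le_mul_of_nonneg_left (hDX.2.trans hnu) hCX.le)
    have hYest : (∑ j, NE.qnorm (T (fun ω => f j ω * (v₀ ω / (u₀ ω + v₀ ω)))) ^ q) ^ (1 / q)
        ≤ CY * Y.nrm v :=
      (hYc n (fun j ω => f j ω * (v₀ ω / (u₀ ω + v₀ ω))) hDY.1).trans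
        (mul_le_mul_of_nonneg_left (hDY.2.trans hnv) hCY.le)
    have hA0 : 0 ≤ ∑ j, NE.qnorm (T (fun ω => f j ω * (u₀ ω / (u₀ ω + v₀ ω)))) ^ q :=
      Finset.sum_nonneg fun j _ => Real.rpow_nonneg (NE.qnorm_nonneg _) q
    have hB0 : 0 ≤ ∑ j, NE.qnorm (T (fun ω => f j ω * (v₀ ω / (u₀ ω + v₀ ω)))) ^ q :=
      Finset.sum_nonneg fun j _ => Real.rpow_nonneg (NE.qnorm_nonneg _) q
    -- per-index estimate
    have hAq : ∀ j, NE.qnorm (T (f j)) ^ q ≤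
        NE.K ^ q * 2 ^ q * NE.qnorm (T (fun ω => f j ω * (u₀ ω / (u₀ ω + v₀ ω)))) ^ q
          + NE.K ^ q * 2 ^ q * NE.qnorm (T (fun ω => f j ω * (v₀ ω / (u₀ ω + v₀ ω)))) ^ q := by
      intro j
      have h1 : NE.qnorm (T (f j)) ≤ NE.K * (NE.qnorm (T (fun ω => f j ω * (u₀ ω / (u₀ ω + v₀ ω))))
          + NE.qnorm (T (fun ω => f j ω * (v₀ ω / (u₀ ω + v₀ ω))))) := by
        rw [hTsplit j]
        exact NE.qnorm_add_le _ _
      have h2 := Real.rpow_le_rpow (NE.qnorm_nonneg _) h1 hq.le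
      have hadd0 : 0 ≤ NE.qnorm (T (fun ω => f j ω * (u₀ ω / (u₀ ω + v₀ ω))))
          + NE.qnorm (T (fun ω => f j ω * (v₀ ω / (u₀ ω + v₀ ω)))) :=
        add_nonneg (NE.qnorm_nonneg _) (NE.qnorm_nonneg _)
      rw [Real.mul_rpow hK.le hadd0] at h2
      have h3 := rpow_add_le2 (NE.qnorm_nonneg (T (fun ω => f j ω * (u₀ ω / (u₀ ω + v₀ ω)))))
        (NE.qnorm_nonneg (T (fun ω => f j ω * (v₀ ω / (u₀ ω + v₀ ω))))) hq
      calc NE.qnorm (T (f j)) ^ q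
          ≤ NE.K ^ q * (NE.qnorm (T (fun ω => f j ω * (u₀ ω / (u₀ ω + v₀ ω))))
              + NE.qnorm (T (fun ω => f j ω * (v₀ ω / (u₀ ω + v₀ ω))))) ^ q := h2
        _ ≤ NE.K ^ q * (2 ^ q * (NE.qnorm (T (fun ω => f j ω * (u₀ ω / (u₀ ω + v₀ ω)))) ^ q
              + NE.qnorm (T (fun ω => f j ω * (v₀ ω / (u₀ ω + v₀ ω)))) ^ q)) :=
            mul_le_mul_of_nonneg_left h3 (Real.rpow_nonneg hK.le q)
        _ = _ := by ring
    have hsum1 : ∑ j, NE.qnorm (T (f j)) ^ q ≤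
        NE.K ^ q * 2 ^ q * ((∑ j, NE.qnorm (T (fun ω => f j ω * (u₀ ω / (u₀ ω + v₀ ω)))) ^ q)
          + ∑ j, NE.qnorm (T (fun ω => f j ω * (v₀ ω / (u₀ ω + v₀ ω)))) ^ q) :=
      (Finset.sum_le_sum fun j _ => hAq j).trans_eq
        (by rw [Finset.sum_add_distrib, ← Finset.mul_sum, ← Finset.mul_sum]; ring)
    have hLle : (∑ j, NE.qnorm (T (f j)) ^ q) ^ (1 / q) ≤
        NE.K * 2 * ((∑ j, NE.qnorm (T (fun ω => f j ω * (u₀ ω / (u₀ ω + v₀ ω)))) ^ q)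
          + ∑ j, NE.qnorm (T (fun ω => f j ω * (v₀ ω / (u₀ ω + v₀ ω)))) ^ q) ^ (1 / q) := by
      have h1 := Real.rpow_le_rpow (Finset.sum_nonneg fun j _ =>
        Real.rpow_nonneg (NE.qnorm_nonneg _) q) hsum1 (by positivity : (0:ℝ) ≤ 1 / q)
      refine h1.trans_eq ?_
      rw [Real.mul_rpow (mul_nonneg (Real.rpow_nonneg hK.le q)
        (Real.rpow_nonneg (by norm_num : (0:ℝ) ≤ 2) q)) (add_nonneg hA0 hB0),
        Real.mul_rpow (Real.rpow_nonneg hK.le q) (Real.rpow_nonneg (by norm_num : (0:ℝ) ≤ 2) q),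
        rpow_inv_rpow' hK.le hq.ne', rpow_inv_rpow' (by norm_num : (0:ℝ) ≤ 2) hq.ne']
    have hfin : X.nrm u + Y.nrm v ≤
        sInf {a : ℝ | ∃ g h : Ω → ℝ, X.Mem g ∧ Y.Mem h ∧
          (fun ω => (∑ j, |f j ω| ^ q) ^ (1 / q)) =ᵐ[μ] g + h ∧ a = X.nrm g + Y.nrm h}
          + ε / (2 * 2 ^ (1 / q) * NE.K * max CX CY) := by
      rw [← haeq]; exact halt.le
    have hnru : 0 ≤ X.nrm u := X.nrm_nonneg u
    have hnrv : 0 ≤ Y.nrm v := Y.nrm_nonneg v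
    calc (∑ j, NE.qnorm (T (f j)) ^ q) ^ (1 / q)
        ≤ NE.K * 2 * ((∑ j, NE.qnorm (T (fun ω => f j ω * (u₀ ω / (u₀ ω + v₀ ω)))) ^ q)
            + ∑ j, NE.qnorm (T (fun ω => f j ω * (v₀ ω / (u₀ ω + v₀ ω)))) ^ q) ^ (1 / q) := hLle
      _ ≤ NE.K * 2 * (2 ^ (1 / q) *
            ((∑ j, NE.qnorm (T (fun ω => f j ω * (u₀ ω / (u₀ ω + v₀ ω)))) ^ q) ^ (1 / q)
            + (∑ j, NE.qnorm (T (fun ω => f j ω * (v₀ ω / (u₀ ω + v₀ ω)))) ^ q) ^ (1 / q))) :=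
          mul_le_mul_of_nonneg_left (rpow_add_le2 hA0 hB0 (by positivity))
            (by positivity)
      _ ≤ NE.K * 2 * (2 ^ (1 / q) * (CX * X.nrm u + CY * Y.nrm v)) :=
          mul_le_mul_of_nonneg_left
            (mul_le_mul_of_nonneg_left (add_le_add hXest hYest) h2q.le)
            (by positivity)
      _ ≤ NE.K * 2 * (2 ^ (1 / q) * (max CX CY * (X.nrm u + Y.nrm v))) := by
          refine mul_le_mul_of_nonneg_left (mul_le_mul_of_nonneg_left ?_ h2q.le) (by positivity)
          rw [mul_add]
          exact add_le_add (mul_le_mul_of_nonneg_right (le_max_left _ _) hnru)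
            (mul_le_mul_of_nonneg_right (le_max_right _ _) hnrv)
      _ ≤ NE.K * 2 * (2 ^ (1 / q) * (max CX CY *
            (sInf {a : ℝ | ∃ g h : Ω → ℝ, X.Mem g ∧ Y.Mem h ∧
              (fun ω => (∑ j, |f j ω| ^ q) ^ (1 / q)) =ᵐ[μ] g + h ∧ a = X.nrm g + Y.nrm h}
              + ε / (2 * 2 ^ (1 / q) * NE.K * max CX CY)))) :=
          mul_le_mul_of_nonneg_left (mul_le_mul_of_nonneg_left
            (mul_le_mul_of_nonneg_left hfin hCm.le) h2q.le) (by positivity)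
      _ = 2 * 2 ^ (1 / q) * NE.K * max CX CY *
            sumNrm μ X.Mem Y.Mem X.nrm Y.nrm (fun ω => (∑ j, |f j ω| ^ q) ^ (1 / q)) + ε := by
          have hrfl : sumNrm μ X.Mem Y.Mem X.nrm Y.nrm
              (fun ω => (∑ j, |f j ω| ^ q) ^ (1 / q)) =
              sInf {a : ℝ | ∃ g h : Ω → ℝ, X.Mem g ∧ Y.Mem h ∧
                (fun ω => (∑ j, |f j ω| ^ q) ^ (1 / q)) =ᵐ[μ] g + h ∧
                a = X.nrm g + Y.nrm h} := rfl
          rw [hrfl]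
          field_simp
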